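/- arXiv:2207.00743 — 2 statements merged into one kernel-verified Lean document; each statement's English description precedes it below -/
import Mathlib

section
/- Every irreducible continuous finite-dimensional complex representation of W_ℝ has dimension 1 or 2. Every continuous group homomorphism W_ℝ → ℂ^× equals φ^{(1)}_{k,λ} for a unique pair (k,λ) ∈ {0,1} × ℂ, and every 2-dimensional irreducible continuous complex representation of W_ℝ is isomorphic to φ^{(2)}_{k,λ} for a unique pair (k,λ) ∈ ℤ_{≥1} × ℂ. -/
noncomputable section

open Quaternion Matrix
open scoped Classical

namespace PTB

/-- The Weil group of `ℝ`, realized inside the units of Hamilton's quaternions as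
`ℂˣ ∪ ℂˣ · j`, where `ℂ = ℝ + ℝ i ⊆ ℍ`. -/
def WeilR : Subgroup (ℍ[ℝ])ˣ where
  carrier := {w | ((w : ℍ[ℝ]).imJ = 0 ∧ (w : ℍ[ℝ]).imK = 0) ∨
    ((w : ℍ[ℝ]).re = 0 ∧ (w : ℍ[ℝ]).imI = 0)}
  one_mem' := by left; simp
  mul_mem' := by
    rintro a b (⟨h1, h2⟩ | ⟨h1, h2⟩) (⟨h3, h4⟩ | ⟨h3, h4⟩)
    · exact Or.inl ⟨by simp [Units.val_mul, Quaternion.imJ_mul, h1, h2, h3, h4],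
        by simp [Units.val_mul, Quaternion.imK_mul, h1, h2, h3, h4]⟩
    · exact Or.inr ⟨by simp [Units.val_mul, Quaternion.re_mul, h1, h2, h3, h4],
        by simp [Units.val_mul, Quaternion.imI_mul, h1, h2, h3, h4]⟩
    · exact Or.inr ⟨by simp [Units.val_mul, Quaternion.re_mul, h1, h2, h3, h4],
        by simp [Units.val_mul, Quaternion.imI_mul, h1, h2, h3, h4]⟩
    · exact Or.inl ⟨by simp [Units.val_mul, Quaternion.imJ_mul, h1, h2, h3, h4],
        by simp [Units.val_mul, Quaternion.imK_mul, h1, h2, h3, h4]⟩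
  inv_mem' := by
    rintro a (⟨h1, h2⟩ | ⟨h1, h2⟩)
    · exact Or.inl ⟨by simp [Units.val_inv_eq_inv_val, Quaternion.inv_def, h1, h2],
        by simp [Units.val_inv_eq_inv_val, Quaternion.inv_def, h1, h2]⟩
    · exact Or.inr ⟨by simp [Units.val_inv_eq_inv_val, Quaternion.inv_def, h1, h2],
        by simp [Units.val_inv_eq_inv_val, Quaternion.inv_def, h1, h2]⟩

/-- The complex number `z` with `w = z ∈ ℂ ⊆ ℍ` (for `w` with `imJ = imK = 0`). -/
def zC (w : ℍ[ℝ]) : ℂ := ⟨w.re, w.imI⟩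

/-- The complex number `z` with `w = z·j` (for `w` with `re = imI = 0`). -/
def zJ (w : ℍ[ℝ]) : ℂ := ⟨w.imJ, w.imK⟩

/-- The character `θ_{k,λ}(z) = (z/|z|)^k |z|^{2λ}` of `ℂˣ`. -/
def theta (k : ℤ) (l : ℂ) (z : ℂ) : ℂ :=
  (z / (‖z‖ : ℂ)) ^ k * (‖z‖ : ℂ) ^ (2 * l)

/-- The character `φ^{(1)}_{k,λ}` of the Weil group: `z ↦ |z|^{2λ}` on `ℂˣ` and `j ↦ (-1)^k`. -/
def phi1 (k : ℤ) (l : ℂ) (w : (ℍ[ℝ])ˣ) : ℂ :=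
  if (w : ℍ[ℝ]).imJ = 0 ∧ (w : ℍ[ℝ]).imK = 0 then
    (‖zC (w : ℍ[ℝ])‖ : ℂ) ^ (2 * l)
  else (-1 : ℂ) ^ k * (‖zJ (w : ℍ[ℝ])‖ : ℂ) ^ (2 * l)

/-- The two-dimensional representation `φ^{(2)}_{k,λ} = Ind_{ℂˣ}^{W_ℝ} θ_{k,λ}` of the Weil
group, in the model where `z ∈ ℂˣ` acts by `diag(θ_{k,λ}(z), θ_{k,λ}(z̄))` and `j` acts by
`[[0, (-1)^k], [1, 0]]`. -/
def phi2 (k : ℤ) (l : ℂ) (w : (ℍ[ℝ])ˣ) : Matrix (Fin 2) (Fin 2) ℂ :=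
  if (w : ℍ[ℝ]).imJ = 0 ∧ (w : ℍ[ℝ]).imK = 0 then
    !![theta k l (zC (w : ℍ[ℝ])), 0; 0, theta k l (starRingEnd ℂ (zC (w : ℍ[ℝ])))]
  else
    !![0, (-1 : ℂ) ^ k * theta k l (zJ (w : ℍ[ℝ]));
       theta k l (starRingEnd ℂ (zJ (w : ℍ[ℝ]))), 0]


/-- A finite-dimensional matrix representation of a group is irreducible if it is nonzero and
has no nonzero proper invariant subspace. -/
def IsIrreducibleRep {G : Type*} [Monoid G] {n : ℕ}
    (ρ : G →* Matrix (Fin n) (Fin n) ℂ) : Prop :=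
  0 < n ∧ ∀ U : Submodule ℂ (Fin n → ℂ),
    (∀ g : G, ∀ v ∈ U, (ρ g).mulVec v ∈ U) → U = ⊥ ∨ U = ⊤


/-! ### Infrastructure -/

/-- ℂ → ℍ ring hom. -/
def cQ : ℂ →+* ℍ[ℝ] where
  toFun z := ⟨z.re, z.im, 0, 0⟩
  map_one' := by ext <;> simp
  map_mul' z w := by
    change (⟨(z * w).re, (z * w).im, 0, 0⟩ : ℍ[ℝ]) = (⟨z.re, z.im, 0, 0⟩ : ℍ[ℝ]) * ⟨w.re, w.im, 0, 0⟩
    ext <;> simp [Quaternion.re_mul, Quaternion.imI_mul,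
      Quaternion.imJ_mul, Quaternion.imK_mul] <;> ring
  map_zero' := by ext <;> simp
  map_add' z w := by
    change (⟨(z + w).re, (z + w).im, 0, 0⟩ : ℍ[ℝ]) = (⟨z.re, z.im, 0, 0⟩ : ℍ[ℝ]) + ⟨w.re, w.im, 0, 0⟩
    ext <;> simp

@[simp] lemma cQ_re (z : ℂ) : (cQ z).re = z.re := rfl
@[simp] lemma cQ_imI (z : ℂ) : (cQ z).imI = z.im := rfl
@[simp] lemma cQ_imJ (z : ℂ) : (cQ z).imJ = 0 := rfl
@[simp] lemma cQ_imK (z : ℂ) : (cQ z).imK = 0 := rfl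

def jQ : ℍ[ℝ] := ⟨0, 0, 1, 0⟩

lemma jQ_mul_jQ : jQ * jQ = -1 := by
  ext <;> simp only [Quaternion.re_mul, Quaternion.imI_mul, Quaternion.imJ_mul,
    Quaternion.imK_mul] <;> simp [jQ]

lemma cQ_mul_jQ (z : ℂ) : cQ z * jQ = ⟨0, 0, z.re, z.im⟩ := by
  ext <;> simp only [Quaternion.re_mul, Quaternion.imI_mul, Quaternion.imJ_mul,
    Quaternion.imK_mul] <;> simp [jQ]

lemma jQ_mul_cQ (z : ℂ) : jQ * cQ z = cQ (starRingEnd ℂ z) * jQ := by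
  ext <;> simp only [Quaternion.re_mul, Quaternion.imI_mul, Quaternion.imJ_mul,
    Quaternion.imK_mul] <;> simp [jQ]

@[simp] lemma zC_cQ (z : ℂ) : zC (cQ z) = z := Complex.ext rfl rfl
@[simp] lemma zJ_cQ_mul_jQ (z : ℂ) : zJ (cQ z * jQ) = z := by
  rw [cQ_mul_jQ]; exact Complex.ext rfl rfl

/-- The unit `j` of the Weil group. -/
def jU : (ℍ[ℝ])ˣ where
  val := jQ
  inv := -jQ
  val_inv := by rw [mul_neg, jQ_mul_jQ, neg_neg]
  inv_val := by rw [neg_mul, jQ_mul_jQ, neg_neg]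

@[simp] lemma jU_val : (jU : ℍ[ℝ]) = jQ := rfl

def jW : WeilR := ⟨jU, Or.inr ⟨rfl, rfl⟩⟩

/-- The embedding `ℂˣ → W_ℝ`. -/
def cU : ℂˣ →* WeilR :=
  (Units.map cQ.toMonoidHom).codRestrict WeilR (fun z => Or.inl ⟨rfl, rfl⟩)

@[simp] lemma cU_val (z : ℂˣ) : (((cU z : WeilR) : (ℍ[ℝ])ˣ) : ℍ[ℝ]) = cQ z := rfl

lemma cU_jW_val (z : ℂˣ) : (((cU z * jW : WeilR) : (ℍ[ℝ])ˣ) : ℍ[ℝ]) = cQ z * jQ := rfl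

/-- Structure: every element of `W_ℝ` is `z` or `z·j`. -/
lemma weil_cases (w : WeilR) : (∃ z : ℂˣ, w = cU z) ∨ (∃ z : ℂˣ, w = cU z * jW) := by
  obtain ⟨u, hu⟩ := w
  rcases hu with ⟨h1, h2⟩ | ⟨h1, h2⟩
  · left
    have hz : zC (u : ℍ[ℝ]) ≠ 0 := by
      intro h
      have : (u : ℍ[ℝ]) = 0 := by
        have hre : (u : ℍ[ℝ]).re = 0 := congrArg Complex.re h
        have him : (u : ℍ[ℝ]).imI = 0 := congrArg Complex.im h
        ext <;> simp [hre, him, h1, h2]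
      exact (Units.ne_zero u) this
    refine ⟨Units.mk0 _ hz, ?_⟩
    apply Subtype.ext; apply Units.ext
    show (u : ℍ[ℝ]) = cQ (zC (u : ℍ[ℝ]))
    ext <;> simp [zC, h1, h2]
  · right
    have hz : zJ (u : ℍ[ℝ]) ≠ 0 := by
      intro h
      have : (u : ℍ[ℝ]) = 0 := by
        have hre : (u : ℍ[ℝ]).imJ = 0 := congrArg Complex.re h
        have him : (u : ℍ[ℝ]).imK = 0 := congrArg Complex.im h
        ext <;> simp [hre, him, h1, h2]
      exact (Units.ne_zero u) this
    refine ⟨Units.mk0 _ hz, ?_⟩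
    apply Subtype.ext; apply Units.ext
    show (u : ℍ[ℝ]) = cQ (zJ (u : ℍ[ℝ])) * jQ
    rw [cQ_mul_jQ]
    ext <;> simp [zJ, h1, h2]

lemma jW_mul_jW : jW * jW = cU (-1) := by
  apply Subtype.ext; apply Units.ext
  show jQ * jQ = cQ ((-1 : ℂˣ) : ℂ)
  rw [jQ_mul_jQ]
  ext <;> simp

lemma cU_mul_jW (z : ℂˣ) : cU z * jW = jW * cU (star z) := by
  apply Subtype.ext; apply Units.ext
  show cQ z * jQ = jQ * cQ ((star z : ℂˣ) : ℂ)
  rw [jQ_mul_cQ, Units.coe_star]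
  simp

/-! ### Analysis: one-parameter subgroups of ℂˣ -/

lemma mu_eq_zero {μ : ℂ} (h : ∀ s : ℝ, Complex.exp (μ * s) = 1) : μ = 0 := by
  by_contra hμ
  have habs : ‖μ‖ ≠ 0 := by simpa using hμ
  set s : ℝ := Real.pi / ‖μ‖ with hs
  obtain ⟨n, hn⟩ := Complex.exp_eq_one_iff.1 (h s)
  have h1 : ‖μ * s‖ = Real.pi := by
    rw [norm_mul, Complex.norm_real, Real.norm_eq_abs, hs]
    rw [abs_of_pos (by positivity : (0:ℝ) < Real.pi / ‖μ‖)]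
    field_simp
  rw [hn] at h1
  have h2 : ‖(n : ℂ) * (2 * Real.pi * Complex.I)‖ =
      |(n : ℝ)| * (2 * Real.pi) := by
    rw [norm_mul]
    simp [abs_of_nonneg Real.pi_pos.le]
    try ring
  rw [h2] at h1
  rcases eq_or_ne n 0 with rfl | hn0
  · simp at h1; exact Real.pi_ne_zero h1.symm
  · have hge : (1:ℝ) ≤ |(n:ℝ)| := by
      have h3 : (1:ℤ) ≤ |n| := Int.one_le_abs hn0
      calc (1:ℝ) = ((1:ℤ):ℝ) := by norm_num
        _ ≤ ((|n|:ℤ):ℝ) := by exact_mod_cast h3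
        _ = |(n:ℝ)| := by push_cast; ring
    nlinarith [Real.pi_pos]

lemma exp_param_inj {a b : ℂ} (h : ∀ s : ℝ, Complex.exp (a * s) = Complex.exp (b * s)) :
    a = b := by
  have : ∀ s : ℝ, Complex.exp ((a - b) * s) = 1 := by
    intro s
    rw [sub_mul, Complex.exp_sub, h s, div_self (Complex.exp_ne_zero _)]
  have := mu_eq_zero this
  linear_combination this

/-- Continuous homomorphisms `(ℝ,+) → (ℂ,*)` are `exp(μ t)`. -/
lemma one_param {g : ℝ → ℂ} (hg : Continuous g) (h0 : g 0 = 1)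
    (hm : ∀ s t : ℝ, g (s + t) = g s * g t) :
    ∃ μ : ℂ, ∀ t : ℝ, g t = Complex.exp (μ * t) := by
  -- choose c with ∫₀ᶜ g ≠ 0
  obtain ⟨δ, hδpos, hδ⟩ := Metric.continuousAt_iff.1 hg.continuousAt (1/2) (by norm_num)
  set c : ℝ := δ / 2 with hc
  have hcpos : 0 < c := by positivity
  have hbound : ∀ s ∈ Set.uIoc (0:ℝ) c, ‖g s - 1‖ ≤ 1/2 := by
    intro s hs
    rw [Set.uIoc_of_le hcpos.le] at hs
    have : dist s 0 < δ := by
      rw [Real.dist_eq, sub_zero, abs_of_pos hs.1]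
      linarith [hs.2]
    have := hδ this
    rw [dist_eq_norm, h0] at this
    exact this.le
  have hgi : ∀ a b : ℝ, IntervalIntegrable g MeasureTheory.volume a b :=
    fun a b => hg.intervalIntegrable a b
  set I : ℂ := ∫ s in (0:ℝ)..c, g s with hI
  have hInz : I ≠ 0 := by
    intro h
    have h1 : ∫ s in (0:ℝ)..c, (g s - 1) = I - c := by
      rw [intervalIntegral.integral_sub (hgi 0 c) intervalIntegrable_const]
      simp [hI]
    have h2 : ‖∫ s in (0:ℝ)..c, (g s - 1)‖ ≤ (1/2) * |c - 0| :=
      intervalIntegral.norm_integral_le_of_norm_le_const fun x hx => hbound x hx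
    rw [h1, h] at h2
    rw [zero_sub, norm_neg, sub_zero, abs_of_pos hcpos] at h2
    have : ‖(c:ℂ)‖ = c := by
      rw [Complex.norm_real, Real.norm_eq_abs, abs_of_pos hcpos]
    rw [this] at h2
    linarith
  -- F' = g
  have hF : ∀ t : ℝ, HasDerivAt (fun u => ∫ s in (0:ℝ)..u, g s) (g t) t := by
    intro t
    exact intervalIntegral.integral_hasDerivAt_right (hgi 0 t)
      (hg.stronglyMeasurableAtFilter _ _) hg.continuousAt
  -- g t * I = F (t+c) - F t
  have key : ∀ t : ℝ, g t * I = (∫ s in (0:ℝ)..(t+c), g s) - ∫ s in (0:ℝ)..t, g s := by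
    intro t
    rw [intervalIntegral.integral_interval_sub_left (hgi 0 (t+c)) (hgi 0 t)]
    rw [show (∫ s in t..(t+c), g s) = ∫ s in (0:ℝ)..c, g (t + s) by
      rw [intervalIntegral.integral_comp_add_left (fun x => g x) t]; norm_num]
    simp_rw [hm]
    rw [intervalIntegral.integral_const_mul]
  -- hence g differentiable with g' t = μ g t
  set μ : ℂ := (g c - 1) * I⁻¹ with hμ
  have hgd : ∀ t : ℝ, HasDerivAt g (μ * g t) t := by
    intro t
    have h1 : HasDerivAt (fun u => ((∫ s in (0:ℝ)..(u+c), g s) - ∫ s in (0:ℝ)..u, g s) * I⁻¹)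
        ((g (t+c) - g t) * I⁻¹) t := by
      refine HasDerivAt.mul_const ?_ _
      refine HasDerivAt.sub ?_ (hF t)
      exact HasDerivAt.comp_add_const t c (hF (t + c))
    have h2 : g = fun u => ((∫ s in (0:ℝ)..(u+c), g s) - ∫ s in (0:ℝ)..u, g s) * I⁻¹ := by
      funext u
      rw [← key u, mul_assoc, mul_inv_cancel₀ hInz, mul_one]
    rw [← h2] at h1
    have h3 : g (t+c) - g t = g t * (g c - 1) := by
      rw [add_comm, hm]; ring
    rw [h3, mul_assoc, ← hμ] at h1
    rwa [mul_comm] at h1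
  -- solve the ODE
  refine ⟨μ, fun t => ?_⟩
  have hconst : ∀ t : ℝ, g t * Complex.exp (-(μ * t)) = 1 := by
    have hd : ∀ u : ℝ, HasDerivAt (fun t : ℝ => g t * Complex.exp (-(μ * t))) 0 u := by
      intro u
      have he : HasDerivAt (fun t : ℝ => Complex.exp (-(μ * t))) (-μ * Complex.exp (-(μ * u))) u := by
        have h1 : HasDerivAt (fun t : ℝ => -(μ * t)) (-μ) u := by
          have : HasDerivAt (fun t : ℝ => (t : ℂ)) 1 u := Complex.ofRealCLM.hasDerivAt
          exact ((this.const_mul μ).neg).congr_deriv (by ring)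
        have := h1.cexp
        exact this.congr_deriv (by ring)
      have := (hgd u).mul he
      exact this.congr_deriv (by ring)
    have hdiff : Differentiable ℝ (fun t : ℝ => g t * Complex.exp (-(μ * t))) :=
      fun u => (hd u).differentiableAt
    intro t
    have := is_const_of_deriv_eq_zero hdiff (fun u => (hd u).deriv) t 0
    rw [this]
    simp [h0]
  have := hconst t
  have h2 := congrArg (· * Complex.exp (μ * t)) this
  simp only [one_mul] at h2
  rw [mul_assoc, ← Complex.exp_add] at h2
  simpa using h2

/-! ### Properties of theta and classification of characters of ℂˣ -/

lemma theta_apply {k : ℤ} {l : ℂ} {z : ℂ} (hz : z ≠ 0) :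
    theta k l z = Complex.exp ((2 * l) * (Real.log ‖z‖ : ℂ)) *
      Complex.exp ((k : ℂ) * ((Complex.arg z : ℂ) * Complex.I)) := by
  have habs : (0:ℝ) < ‖z‖ := by simpa using hz
  have habsC : ((‖z‖ : ℝ) : ℂ) ≠ 0 := by
    simpa using habs.ne'
  unfold theta
  have h1 : ((‖z‖ : ℝ) : ℂ) ^ (2 * l) =
      Complex.exp ((2 * l) * (Real.log ‖z‖ : ℂ)) := by
    rw [Complex.cpow_def_of_ne_zero habsC, ← Complex.ofReal_log habs.le, mul_comm]
  have h2 : z / ((‖z‖ : ℝ) : ℂ) = Complex.exp ((Complex.arg z : ℂ) * Complex.I) := by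
    rw [div_eq_iff habsC, mul_comm]
    exact (Complex.norm_mul_exp_arg_mul_I z).symm
  rw [h1, h2, ← Complex.exp_int_mul, mul_comm]

lemma theta_exp_real (k : ℤ) (l : ℂ) (s : ℝ) :
    theta k l ((Real.exp s : ℝ) : ℂ) = Complex.exp ((2 * l) * (s : ℂ)) := by
  rw [theta_apply (Complex.ofReal_ne_zero.2 (Real.exp_pos s).ne')]
  rw [show ‖((Real.exp s : ℝ) : ℂ)‖ = Real.exp s by
    rw [Complex.norm_real, Real.norm_eq_abs, abs_of_pos (Real.exp_pos s)]]
  rw [Real.log_exp, Complex.arg_ofReal_of_nonneg (Real.exp_pos s).le]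
  simp

lemma theta_circle (k : ℤ) (l : ℂ) (s : ℝ) :
    theta k l (Complex.exp ((s : ℂ) * Complex.I)) = Complex.exp ((k : ℂ) * ((s : ℂ) * Complex.I)) := by
  unfold theta
  rw [show ‖Complex.exp ((s : ℂ) * Complex.I)‖ = 1 from Complex.norm_exp_ofReal_mul_I s]
  rw [Complex.ofReal_one, div_one, Complex.one_cpow, mul_one, ← Complex.exp_int_mul]

lemma theta_neg_one (k : ℤ) (l : ℂ) : theta k l (-1) = (-1 : ℂ) ^ k := by
  unfold theta
  simp [Complex.one_cpow]

lemma theta_conj {z : ℂ} (hz : z ≠ 0) (k : ℤ) (l : ℂ) :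
    theta k l (starRingEnd ℂ z) = theta (-k) l z := by
  unfold theta
  have habs : ‖starRingEnd ℂ z‖ = ‖z‖ := Complex.norm_conj z
  rw [habs]
  have habsC : ((‖z‖ : ℝ) : ℂ) ≠ 0 := by
    simpa using hz
  have hu : ‖z / ((‖z‖ : ℝ) : ℂ)‖ = 1 := by
    rw [norm_div, Complex.norm_real, Real.norm_eq_abs, abs_of_pos (by simpa using hz),
      div_self (by simpa using hz : ‖z‖ ≠ 0)]
  have hconj : starRingEnd ℂ z / ((‖z‖ : ℝ) : ℂ) = (z / ((‖z‖ : ℝ) : ℂ))⁻¹ := by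
    rw [Complex.inv_eq_conj hu, map_div₀]
    simp
  rw [hconj, _root_.inv_zpow, ← _root_.zpow_neg]

/-- exp as a map to units. -/
def E (z : ℂ) : ℂˣ := Units.mk0 (Complex.exp z) (Complex.exp_ne_zero z)

@[simp] lemma E_val (z : ℂ) : ((E z : ℂˣ) : ℂ) = Complex.exp z := rfl

lemma E_add (z w : ℂ) : E (z + w) = E z * E w := by
  apply Units.ext; simp [Complex.exp_add]

lemma continuous_E : Continuous E := by
  rw [Units.continuous_iff]
  constructor
  · exact Complex.continuous_exp
  · have : (fun z : ℂ => (((E z)⁻¹ : ℂˣ) : ℂ)) = fun z => Complex.exp (-z) := by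
      funext z
      rw [← E_val (-z)]
      congr 1
      rw [eq_comm, eq_inv_iff_mul_eq_one, ← E_add]
      simp
      apply Units.ext
      simp
    rw [this]
    exact Complex.continuous_exp.comp continuous_neg

/-- Classification of continuous characters of `ℂˣ`. -/
lemma char_classify (χ : ℂˣ →* ℂˣ) (hχ : Continuous fun z : ℂˣ => ((χ z : ℂˣ) : ℂ)) :
    ∃ (k : ℤ) (l : ℂ), ∀ z : ℂˣ, ((χ z : ℂˣ) : ℂ) = theta k l (z : ℂ) := by
  have hcE : Continuous (fun z : ℂ => ((χ (E z) : ℂˣ) : ℂ)) :=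
    hχ.comp continuous_E
  -- real one-parameter subgroup
  obtain ⟨a, ha⟩ := one_param (g := fun s : ℝ => ((χ (E (s : ℂ)) : ℂˣ) : ℂ))
    (hcE.comp Complex.continuous_ofReal)
    (by show ((χ (E ((0:ℝ) : ℂ)) : ℂˣ) : ℂ) = 1
        rw [show ((0:ℝ):ℂ) = 0 by norm_num, show E 0 = 1 from Units.ext (by simp),
          _root_.map_one, Units.val_one])
    (by
      intro s t
      show ((χ (E ((s + t : ℝ) : ℂ)) : ℂˣ) : ℂ) = _
      push_cast
      rw [E_add, _root_.map_mul, Units.val_mul])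
  -- circle one-parameter subgroup
  obtain ⟨b, hb⟩ := one_param (g := fun s : ℝ => ((χ (E ((s : ℂ) * Complex.I)) : ℂˣ) : ℂ))
    (hcE.comp (Complex.continuous_ofReal.mul continuous_const))
    (by show ((χ (E (((0:ℝ) : ℂ) * Complex.I)) : ℂˣ) : ℂ) = 1
        rw [show ((0:ℝ):ℂ) * Complex.I = 0 by push_cast; ring,
          show E 0 = 1 from Units.ext (by simp), _root_.map_one, Units.val_one])
    (by
      intro s t
      show ((χ (E (((s + t : ℝ) : ℂ) * Complex.I)) : ℂˣ) : ℂ) = _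
      rw [show ((s + t : ℝ) : ℂ) * Complex.I = (s : ℂ) * Complex.I + (t : ℂ) * Complex.I by
        push_cast; ring]
      rw [E_add, _root_.map_mul, Units.val_mul])
  -- b = n * I
  have hper : Complex.exp (b * ((2 * Real.pi : ℝ) : ℂ)) = 1 := by
    rw [← hb (2 * Real.pi)]
    rw [show (((2 * Real.pi : ℝ) : ℂ)) * Complex.I = 2 * (Real.pi : ℂ) * Complex.I by push_cast; ring]
    rw [show E (2 * (Real.pi : ℂ) * Complex.I) = 1 from Units.ext (by simp [Complex.exp_two_pi_mul_I])]
    simp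
  obtain ⟨n, hn⟩ := Complex.exp_eq_one_iff.1 hper
  have h2pi : (((2 * Real.pi : ℝ)) : ℂ) ≠ 0 := by
    simp [Real.pi_ne_zero]
  have hbn : b = (n : ℂ) * Complex.I := by
    apply mul_right_cancel₀ h2pi
    rw [hn]
    push_cast
    ring
  refine ⟨n, a / 2, fun z => ?_⟩
  -- decompose z
  set r : ℝ := Real.log ‖(z : ℂ)‖ with hr
  set targ : ℝ := Complex.arg (z : ℂ) with htarg
  have habs : (0:ℝ) < ‖(z : ℂ)‖ := by
    simpa using z.ne_zero
  have hz : z = E (r : ℂ) * E ((targ : ℂ) * Complex.I) := by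
    apply Units.ext
    rw [Units.val_mul, E_val, E_val, ← Complex.ofReal_exp, Real.exp_log habs]
    exact (Complex.norm_mul_exp_arg_mul_I (z : ℂ)).symm
  have hχz : ((χ z : ℂˣ) : ℂ) = ((χ (E (r : ℂ)) : ℂˣ) : ℂ) * ((χ (E ((targ : ℂ) * Complex.I)) : ℂˣ) : ℂ) := by
    rw [hz, _root_.map_mul, Units.val_mul]
  rw [theta_apply z.ne_zero, hχz, ha r, hb targ, hbn]
  congr 1
  · congr 1
    push_cast
    ring
  · congr 1
    ring

/-! ### Common eigenvectors for commuting families -/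

lemma exists_common_eigenvector {n : ℕ} (hn : 0 < n)
    (S : Set (Module.End ℂ (Fin n → ℂ)))
    (hS : ∀ f ∈ S, ∀ g ∈ S, f * g = g * f) :
    ∃ v : Fin n → ℂ, v ≠ 0 ∧ ∀ f ∈ S, ∃ μ : ℂ, f v = μ • v := by
  haveI : Nonempty (Fin n) := ⟨⟨0, hn⟩⟩
  haveI : Nontrivial (Fin n → ℂ) := inferInstance
  set inv : Set (Submodule ℂ (Fin n → ℂ)) :=
    {U | U ≠ ⊥ ∧ ∀ f ∈ S, ∀ x ∈ U, f x ∈ U} with hinv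
  have htop : (⊤ : Submodule ℂ (Fin n → ℂ)) ∈ inv :=
    ⟨bot_lt_top.ne', fun f _ x _ => trivial⟩
  -- pick an invariant subspace of minimal positive rank
  have hne : {m | ∃ U ∈ inv, Module.finrank ℂ U = m}.Nonempty := ⟨_, ⊤, htop, rfl⟩
  obtain ⟨U, hU, hUrank⟩ := Nat.sInf_mem hne
  have hmin : ∀ W ∈ inv, Module.finrank ℂ U ≤ Module.finrank ℂ W := by
    intro W hW
    rw [hUrank]
    exact Nat.sInf_le ⟨W, hW, rfl⟩
  obtain ⟨v, hvU, hv⟩ := Submodule.exists_mem_ne_zero_of_ne_bot hU.1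
  refine ⟨v, hv, fun f hf => ?_⟩
  -- restrict f to U
  haveI : Nontrivial U := Submodule.nontrivial_iff_ne_bot.2 hU.1
  set f' : Module.End ℂ U := LinearMap.restrict f (hU.2 f hf) with hf'
  obtain ⟨μ, hμ⟩ := Module.End.exists_eigenvalue f'
  obtain ⟨u, hu⟩ := hμ.exists_hasEigenvector
  set W : Submodule ℂ (Fin n → ℂ) := U ⊓ Module.End.eigenspace f μ with hW
  have hWinv : W ∈ inv := by
    constructor
    · intro hbot
      have humem : (u : Fin n → ℂ) ∈ W := by
        refine ⟨u.2, Module.End.mem_eigenspace_iff.2 ?_⟩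
        have := hu.apply_eq_smul
        have h2 := congrArg (Subtype.val) this
        rw [LinearMap.restrict_apply] at h2
        exact h2
      rw [hbot] at humem
      exact hu.2 (Subtype.ext (by simpa using humem))
    · intro g hg x hx
      refine ⟨hU.2 g hg x hx.1, Module.End.mem_eigenspace_iff.2 ?_⟩
      have hcomm := hS f hf g hg
      have hfg : f (g x) = g (f x) := by
        have := congrArg (fun h => h x) hcomm
        simpa [Module.End.mul_apply] using this
      rw [hfg, Module.End.mem_eigenspace_iff.1 hx.2, _root_.map_smul]
  have hWU : W = U := by
    apply Submodule.eq_of_le_of_finrank_le inf_le_left (hmin W hWinv)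
  have hUeig : ∀ x ∈ U, f x = μ • x := by
    intro x hx
    have : x ∈ W := hWU.symm ▸ hx
    exact Module.End.mem_eigenspace_iff.1 this.2
  exact ⟨μ, hUeig v hvU⟩

/-! ### Continuity of the embedding ℂˣ → W_ℝ -/

lemma continuous_cQ : Continuous cQ := by
  let T : ℂ →ₗ[ℝ] ℍ[ℝ] :=
    { toFun := cQ
      map_add' := fun x y => by ext <;> simp
      map_smul' := fun c x => by
        ext <;> simp [Quaternion.re_smul, Quaternion.imI_smul, Quaternion.imJ_smul,
          Quaternion.imK_smul] }
  exact T.continuous_of_finiteDimensional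

lemma continuous_cU : Continuous (fun z : ℂˣ => (cU z : WeilR)) := by
  apply Continuous.subtype_mk
  rw [Units.continuous_iff]
  constructor
  · exact continuous_cQ.comp Units.continuous_val
  · show Continuous fun z : ℂˣ => (((Units.map cQ.toMonoidHom z)⁻¹ : (ℍ[ℝ])ˣ) : ℍ[ℝ])
    have : (fun z : ℂˣ => (((Units.map cQ.toMonoidHom z)⁻¹ : (ℍ[ℝ])ˣ) : ℍ[ℝ]))
        = fun z : ℂˣ => cQ.toMonoidHom ((z⁻¹ : ℂˣ) : ℂ) := by
      funext z
      exact Units.coe_map_inv cQ.toMonoidHom z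
    rw [this]
    exact continuous_cQ.comp Units.continuous_coe_inv

/-! ### Setup for representations, and Part 1 -/

section Rep
variable {n : ℕ} (ρ : WeilR →* Matrix (Fin n) (Fin n) ℂ)

lemma rep_comm (z z' : ℂˣ) : ρ (cU z) * ρ (cU z') = ρ (cU z') * ρ (cU z) := by
  rw [← _root_.map_mul, ← _root_.map_mul, ← _root_.map_mul, ← _root_.map_mul, mul_comm z z']

lemma rep_braid (z : ℂˣ) : ρ (cU z) * ρ jW = ρ jW * ρ (cU (star z)) := by
  rw [← _root_.map_mul, ← _root_.map_mul, cU_mul_jW]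

lemma rep_jsq : ρ jW * ρ jW = ρ (cU (-1)) := by
  rw [← _root_.map_mul, jW_mul_jW]

/-- Common eigenvector for the restriction to `ℂˣ`. -/
lemma rep_eigen (hn : 0 < n) :
    ∃ v : Fin n → ℂ, v ≠ 0 ∧ ∃ c : ℂˣ → ℂ, ∀ z : ℂˣ, (ρ (cU z)) *ᵥ v = c z • v := by
  obtain ⟨v, hv, hev⟩ := exists_common_eigenvector hn
    (Set.range (fun z : ℂˣ => Matrix.mulVecLin (ρ (cU z))))
    (by
      rintro f ⟨z, rfl⟩ g ⟨z', rfl⟩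
      show Matrix.mulVecLin _ * Matrix.mulVecLin _ = Matrix.mulVecLin _ * Matrix.mulVecLin _
      rw [Module.End.mul_eq_comp, Module.End.mul_eq_comp, ← Matrix.mulVecLin_mul,
        ← Matrix.mulVecLin_mul, rep_comm])
  have hc : ∀ z : ℂˣ, ∃ μ : ℂ, (ρ (cU z)) *ᵥ v = μ • v := by
    intro z
    obtain ⟨μ, hμ⟩ := hev _ ⟨z, rfl⟩
    exact ⟨μ, by rw [← Matrix.mulVecLin_apply, hμ]⟩
  choose c hcv using hc
  exact ⟨v, hv, c, hcv⟩

section eigen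
variable {ρ} {v : Fin n → ℂ} {c : ℂˣ → ℂ}
variable (hcv : ∀ z : ℂˣ, (ρ (cU z)) *ᵥ v = c z • v)
include hcv

lemma rep_act_jv (z : ℂˣ) :
    (ρ (cU z)) *ᵥ ((ρ jW) *ᵥ v) = c (star z) • ((ρ jW) *ᵥ v) := by
  rw [Matrix.mulVec_mulVec, rep_braid, ← Matrix.mulVec_mulVec, hcv, Matrix.mulVec_smul]

lemma rep_act_jjv : (ρ jW) *ᵥ ((ρ jW) *ᵥ v) = c (-1) • v := by
  rw [Matrix.mulVec_mulVec, rep_jsq, hcv]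

lemma rep_span_invariant :
    ∀ g : WeilR, ∀ x ∈ Submodule.span ℂ {v, (ρ jW) *ᵥ v}, (ρ g) *ᵥ x ∈ Submodule.span ℂ {v, (ρ jW) *ᵥ v} := by
  intro g x hx
  have hvU : v ∈ Submodule.span ℂ {v, (ρ jW) *ᵥ v} :=
    Submodule.subset_span (Set.mem_insert _ _)
  have hjvU : (ρ jW) *ᵥ v ∈ Submodule.span ℂ {v, (ρ jW) *ᵥ v} :=
    Submodule.subset_span (Set.mem_insert_of_mem _ rfl)
  induction hx using Submodule.span_induction with
  | mem y hy =>
    rcases weil_cases g with ⟨z, rfl⟩ | ⟨z, rfl⟩ <;> rcases hy with rfl | rfl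
    · rw [hcv]; exact Submodule.smul_mem _ _ hvU
    · rw [rep_act_jv hcv]; exact Submodule.smul_mem _ _ hjvU
    · rw [_root_.map_mul, ← Matrix.mulVec_mulVec, rep_act_jv hcv]
      exact Submodule.smul_mem _ _ hjvU
    · rw [_root_.map_mul, ← Matrix.mulVec_mulVec, rep_act_jjv hcv, Matrix.mulVec_smul, hcv]
      exact Submodule.smul_mem _ _ (Submodule.smul_mem _ _ hvU)
  | zero => rw [Matrix.mulVec_zero]; exact Submodule.zero_mem _
  | add a b _ _ ha hb => rw [Matrix.mulVec_add]; exact Submodule.add_mem _ ha hb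
  | smul t a _ ha => rw [Matrix.mulVec_smul]; exact Submodule.smul_mem _ _ ha

end eigen

/-- Part 1. -/
lemma part1 (hcont : Continuous fun w : WeilR => ρ w) (hirr : IsIrreducibleRep ρ) :
    n = 1 ∨ n = 2 := by
  obtain ⟨hn, hsub⟩ := hirr
  obtain ⟨v, hv, c, hcv⟩ := rep_eigen ρ hn
  rcases hsub (Submodule.span ℂ {v, (ρ jW) *ᵥ v}) (rep_span_invariant hcv) with hbot | htop
  · exfalso
    apply hv
    have : v ∈ Submodule.span ℂ {v, (ρ jW) *ᵥ v} :=
      Submodule.subset_span (Set.mem_insert _ _)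
    rw [hbot] at this
    simpa using this
  · have h1 : Module.finrank ℂ (Fin n → ℂ) ≤ 2 := by
      haveI : Fintype ({v, (ρ jW) *ᵥ v} : Set (Fin n → ℂ)) := Set.fintypeInsert _ _
      have := finrank_span_le_card (R := ℂ) ({v, (ρ jW) *ᵥ v} : Set (Fin n → ℂ))
      rw [htop, finrank_top] at this
      refine this.trans ?_
      have : ({v, (ρ jW) *ᵥ v} : Set (Fin n → ℂ)).toFinset ⊆ {v, (ρ jW) *ᵥ v} := by
        intro x hx
        simpa using (Set.mem_toFinset.1 hx)
      calc ({v, (ρ jW) *ᵥ v} : Set (Fin n → ℂ)).toFinset.card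
          ≤ ({v, (ρ jW) *ᵥ v} : Finset (Fin n → ℂ)).card := Finset.card_le_card this
        _ ≤ 2 := Finset.card_insert_le _ _ |>.trans (by simp)
    rw [Module.finrank_pi ℂ] at h1
    simp at h1
    omega

end Rep

/-! ### Values of phi1 -/

lemma phi1_cU (k : ℤ) (l : ℂ) (z : ℂˣ) :
    phi1 k l ((cU z : WeilR) : (ℍ[ℝ])ˣ) = (‖(z : ℂ)‖ : ℂ) ^ (2 * l) := by
  unfold phi1
  rw [if_pos ⟨rfl, rfl⟩]
  rw [show zC (((cU z : WeilR) : (ℍ[ℝ])ˣ) : ℍ[ℝ]) = (z : ℂ) from zC_cQ _]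

lemma phi1_cU_jW (k : ℤ) (l : ℂ) (z : ℂˣ) :
    phi1 k l ((cU z * jW : WeilR) : (ℍ[ℝ])ˣ) =
      (-1 : ℂ) ^ k * (‖(z : ℂ)‖ : ℂ) ^ (2 * l) := by
  unfold phi1
  rw [if_neg, show zJ (((cU z * jW : WeilR) : (ℍ[ℝ])ˣ) : ℍ[ℝ]) = (z : ℂ) from zJ_cQ_mul_jQ _]
  rw [cU_jW_val, cQ_mul_jQ]
  rintro ⟨h1, h2⟩
  exact z.ne_zero (Complex.ext h1 h2)

lemma phi1_jW (k : ℤ) (l : ℂ) :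
    phi1 k l ((jW : WeilR) : (ℍ[ℝ])ˣ) = (-1 : ℂ) ^ k := by
  unfold phi1
  rw [if_neg]
  · rw [show zJ (((jW : WeilR) : (ℍ[ℝ])ˣ) : ℍ[ℝ]) = 1 from Complex.ext rfl rfl]
    simp [Complex.one_cpow]
  · rintro ⟨h1, _⟩
    exact one_ne_zero h1

lemma cpow_exp_real (y : ℂ) (s : ℝ) :
    ((Real.exp s : ℝ) : ℂ) ^ y = Complex.exp (y * (s : ℂ)) := by
  rw [Complex.cpow_def_of_ne_zero (Complex.ofReal_ne_zero.2 (Real.exp_pos s).ne'),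
    ← Complex.ofReal_log (Real.exp_pos s).le, Real.log_exp, mul_comm]

/-- Part 2. -/
lemma part2 (ρ : WeilR →* ℂˣ) (hcont : Continuous fun w : WeilR => ((ρ w : ℂˣ) : ℂ)) :
    ∃! p : ℤ × ℂ, (p.1 = 0 ∨ p.1 = 1) ∧
      ∀ w : WeilR, ((ρ w : ℂˣ) : ℂ) = phi1 p.1 p.2 (w : (ℍ[ℝ])ˣ) := by
  set χ : ℂˣ →* ℂˣ := ρ.comp cU with hχ
  have hχcont : Continuous fun z : ℂˣ => ((χ z : ℂˣ) : ℂ) := hcont.comp continuous_cU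
  obtain ⟨k0, l, hθ⟩ := char_classify χ hχcont
  -- conjugation invariance
  have hconj : ∀ z : ℂˣ, χ (star z) = χ z := by
    intro z
    have h1 : jW * cU (star z) = cU z * jW := (cU_mul_jW z).symm
    have h2 : ρ jW * ρ (cU (star z)) = ρ jW * ρ (cU z) := by
      rw [← _root_.map_mul, h1, _root_.map_mul, mul_comm]
    exact mul_left_cancel h2
  -- k0 = 0
  have hstarE : ∀ s : ℝ, star (E ((s : ℂ) * Complex.I)) = E (((-s : ℝ) : ℂ) * Complex.I) := by
    intro s
    apply Units.ext
    show starRingEnd ℂ (Complex.exp _) = Complex.exp _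
    rw [← Complex.exp_conj]
    congr 1
    simp
  have hk0 : k0 = 0 := by
    have key : ∀ s : ℝ, Complex.exp ((((-k0 : ℤ) : ℂ) * Complex.I) * (s : ℂ)) =
        Complex.exp ((((k0 : ℤ) : ℂ) * Complex.I) * (s : ℂ)) := by
      intro s
      have h2 := hθ (star (E ((s : ℂ) * Complex.I)))
      rw [hconj, hθ (E ((s : ℂ) * Complex.I)), hstarE] at h2
      rw [E_val, E_val] at h2
      rw [theta_circle, theta_circle] at h2
      calc Complex.exp ((((-k0 : ℤ) : ℂ) * Complex.I) * (s : ℂ))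
          = Complex.exp ((k0 : ℂ) * (((-s : ℝ) : ℂ) * Complex.I)) := by
            congr 1; push_cast; ring
        _ = Complex.exp ((k0 : ℂ) * ((s : ℂ) * Complex.I)) := h2.symm
        _ = Complex.exp ((((k0 : ℤ) : ℂ) * Complex.I) * (s : ℂ)) := by congr 1; push_cast; ring
    have h3 := exp_param_inj key
    have hI : ((-k0 : ℤ) : ℂ) = ((k0 : ℤ) : ℂ) :=
      mul_right_cancel₀ Complex.I_ne_zero h3
    have : (-k0 : ℤ) = k0 := by exact_mod_cast hI
    omega
  -- value at j
  have hjsq : ((ρ jW : ℂˣ) : ℂ) * ((ρ jW : ℂˣ) : ℂ) = 1 := by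
    have h1 : ρ jW * ρ jW = χ (-1) := by
      rw [← _root_.map_mul, jW_mul_jW]; rfl
    have h2 := hθ (-1)
    rw [hk0] at h2
    have h3 : theta 0 l ((-1 : ℂˣ) : ℂ) = 1 := by
      rw [show ((-1 : ℂˣ) : ℂ) = -1 from rfl, theta_neg_one]
      norm_num
    calc ((ρ jW : ℂˣ) : ℂ) * ((ρ jW : ℂˣ) : ℂ) = ((ρ jW * ρ jW : ℂˣ) : ℂ) := by
          rw [Units.val_mul]
      _ = ((χ (-1) : ℂˣ) : ℂ) := by rw [h1]
      _ = 1 := by rw [h2, h3]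
  have hεcases : ((ρ jW : ℂˣ) : ℂ) = 1 ∨ ((ρ jW : ℂˣ) : ℂ) = -1 := by
    have h0 : (((ρ jW : ℂˣ) : ℂ) - 1) * (((ρ jW : ℂˣ) : ℂ) + 1) = 0 := by
      linear_combination hjsq
    rcases mul_eq_zero.1 h0 with h | h
    · left; linear_combination h
    · right; linear_combination h
  set k : ℤ := if ((ρ jW : ℂˣ) : ℂ) = 1 then 0 else 1 with hk
  have hε : ((ρ jW : ℂˣ) : ℂ) = (-1 : ℂ) ^ k := by
    rcases hεcases with h | h
    · rw [hk, if_pos h, zpow_zero]; exact h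
    · have hne : ((ρ jW : ℂˣ) : ℂ) ≠ 1 := by rw [h]; norm_num
      rw [hk, if_neg hne, zpow_one]; exact h
  have hk01 : k = 0 ∨ k = 1 := by rw [hk]; split <;> simp
  have hχval : ∀ z : ℂˣ, ((χ z : ℂˣ) : ℂ) = (‖((z : ℂˣ) : ℂ)‖ : ℂ) ^ (2 * l) := by
    intro z
    rw [hθ z, hk0]
    unfold theta
    rw [zpow_zero, one_mul]
  have hmain : ∀ w : WeilR, ((ρ w : ℂˣ) : ℂ) = phi1 k l (w : (ℍ[ℝ])ˣ) := by
    intro w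
    rcases weil_cases w with ⟨z, rfl⟩ | ⟨z, rfl⟩
    · rw [phi1_cU, ← hχval z]; rfl
    · rw [phi1_cU_jW, _root_.map_mul, Units.val_mul]
      rw [show ((ρ (cU z) : ℂˣ) : ℂ) = ((χ z : ℂˣ) : ℂ) from rfl, hχval z, hε]
      ring
  refine ⟨(k, l), ⟨hk01, hmain⟩, ?_⟩
  rintro ⟨k', l'⟩ ⟨hk'01, hmain'⟩
  replace hk'01 : k' = 0 ∨ k' = 1 := hk'01
  replace hmain' : ∀ w : WeilR, ((ρ w : ℂˣ) : ℂ) = phi1 k' l' (w : (ℍ[ℝ])ˣ) := hmain'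
  have hagree : ∀ w : WeilR, phi1 k' l' (w : (ℍ[ℝ])ˣ) = phi1 k l (w : (ℍ[ℝ])ˣ) := by
    intro w
    rw [← hmain w, ← hmain' w]
  have hl : l' = l := by
    have key : ∀ s : ℝ, Complex.exp ((2 * l') * (s : ℂ)) = Complex.exp ((2 * l) * (s : ℂ)) := by
      intro s
      have h := hagree (cU (E ((s : ℝ) : ℂ)))
      rw [phi1_cU, phi1_cU] at h
      rw [show ((E ((s : ℝ) : ℂ) : ℂˣ) : ℂ) = ((Real.exp s : ℝ) : ℂ) by
        rw [E_val, Complex.ofReal_exp]] at h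
      rw [show ‖((Real.exp s : ℝ) : ℂ)‖ = ((Real.exp s : ℝ)) by
        rw [Complex.norm_real, Real.norm_eq_abs, abs_of_pos (Real.exp_pos s)], cpow_exp_real, cpow_exp_real] at h
      exact h
    have h2 := exp_param_inj key
    have h3 : (2 : ℂ) ≠ 0 := two_ne_zero
    exact mul_left_cancel₀ h3 h2
  have hkk : k' = k := by
    have h := hagree jW
    rw [phi1_jW, phi1_jW] at h
    rcases hk'01 with h0 | h0 <;> rcases hk01 with g0 | g0 <;>
      rw [h0, g0] at h ⊢ <;> first
      | rfl
      | (exfalso; rw [zpow_zero, zpow_one] at h; norm_num at h)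
      | (exfalso; rw [zpow_one, zpow_zero] at h; norm_num at h)
  show ((k' : ℤ), l') = ((k : ℤ), l)
  rw [hkk, hl]

/-! ### Values of phi2 -/

lemma phi2_cU (k : ℤ) (l : ℂ) (z : ℂˣ) :
    phi2 k l ((cU z : WeilR) : (ℍ[ℝ])ˣ) =
      !![theta k l (z : ℂ), 0; 0, theta k l (starRingEnd ℂ (z : ℂ))] := by
  unfold phi2
  rw [if_pos ⟨rfl, rfl⟩]
  rw [show zC (((cU z : WeilR) : (ℍ[ℝ])ˣ) : ℍ[ℝ]) = (z : ℂ) from zC_cQ _]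

lemma phi2_cU_jW (k : ℤ) (l : ℂ) (z : ℂˣ) :
    phi2 k l ((cU z * jW : WeilR) : (ℍ[ℝ])ˣ) =
      !![0, (-1 : ℂ) ^ k * theta k l (z : ℂ); theta k l (starRingEnd ℂ (z : ℂ)), 0] := by
  unfold phi2
  rw [if_neg, show zJ (((cU z * jW : WeilR) : (ℍ[ℝ])ˣ) : ℍ[ℝ]) = (z : ℂ) from zJ_cQ_mul_jQ _]
  rw [cU_jW_val, cQ_mul_jQ]
  rintro ⟨h1, h2⟩
  exact z.ne_zero (Complex.ext h1 h2)

lemma mulVec_two (a b c d x y : ℂ) :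
    !![a, b; c, d] *ᵥ ![x, y] = ![a * x + b * y, c * x + d * y] := by
  funext i
  fin_cases i <;> simp [Matrix.mulVec, dotProduct, Fin.sum_univ_two]

lemma smul_two (t x y : ℂ) : t • ![x, y] = ![t * x, t * y] := by
  funext i
  fin_cases i <;> simp

/-! ### Building the equivalence -/

lemma build_equiv {ρ : WeilR →* Matrix (Fin 2) (Fin 2) ℂ} {k : ℤ} {l : ℂ}
    {v w : Fin 2 → ℂ}
    (hv : ∀ z : ℂˣ, (ρ (cU z)) *ᵥ v = theta k l (z : ℂ) • v)
    (hw : ∀ z : ℂˣ, (ρ (cU z)) *ᵥ w = theta k l (starRingEnd ℂ (z : ℂ)) • w)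
    (hjv : (ρ jW) *ᵥ v = w)
    (hjw : (ρ jW) *ᵥ w = theta k l (-1) • v)
    (hspan : ⊤ ≤ Submodule.span ℂ (Set.range ![v, w])) :
    ∃ e : (Fin 2 → ℂ) ≃ₗ[ℂ] (Fin 2 → ℂ), ∀ (g : WeilR) (x : Fin 2 → ℂ),
      e ((ρ g) *ᵥ x) = (phi2 k l (g : (ℍ[ℝ])ˣ)) *ᵥ (e x) := by
  have hcard : Fintype.card (Fin 2) = Module.finrank ℂ (Fin 2 → ℂ) := by
    simp [Module.finrank_pi]
  set B := basisOfTopLeSpanOfCardEqFinrank ![v, w] hspan hcard with hBdef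
  have hB : ⇑B = ![v, w] := coe_basisOfTopLeSpanOfCardEqFinrank _ _ _
  have hB0 : B 0 = v := by rw [show B 0 = ![v, w] 0 from congrFun hB 0]; rfl
  have hB1 : B 1 = w := by rw [show B 1 = ![v, w] 1 from congrFun hB 1]; rfl
  have hev : B.equivFun v = ![1, 0] := by
    rw [← hB0]
    funext j
    rw [B.equivFun_self]
    fin_cases j <;> simp
  have hew : B.equivFun w = ![0, 1] := by
    rw [← hB1]
    funext j
    rw [B.equivFun_self]
    fin_cases j <;> simp
  refine ⟨B.equivFun, fun g x => ?_⟩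
  have hL : (B.equivFun : (Fin 2 → ℂ) ≃ₗ[ℂ] (Fin 2 → ℂ)).toLinearMap.comp
        (Matrix.mulVecLin (ρ g))
      = (Matrix.mulVecLin (phi2 k l (g : (ℍ[ℝ])ˣ))).comp
        (B.equivFun : (Fin 2 → ℂ) ≃ₗ[ℂ] (Fin 2 → ℂ)).toLinearMap := by
    apply B.ext
    intro i
    simp only [LinearMap.comp_apply, Matrix.mulVecLin_apply, LinearEquiv.coe_coe]
    rcases weil_cases g with ⟨z, rfl⟩ | ⟨z, rfl⟩ <;> fin_cases i
    · -- g = cU z, i = 0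
      rw [show B ⟨0, by norm_num⟩ = v from hB0, hv z, _root_.map_smul, hev, phi2_cU,
        mulVec_two, smul_two]
      funext j; fin_cases j <;> simp
    · rw [show B ⟨1, by norm_num⟩ = w from hB1, hw z, _root_.map_smul, hew, phi2_cU,
        mulVec_two, smul_two]
      funext j; fin_cases j <;> simp
    · -- g = cU z * jW, i = 0
      rw [show B ⟨0, by norm_num⟩ = v from hB0, _root_.map_mul, ← Matrix.mulVec_mulVec,
        hjv, hw z, _root_.map_smul, hev, hew, phi2_cU_jW, mulVec_two, smul_two]
      funext j; fin_cases j <;> simp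
    · rw [show B ⟨1, by norm_num⟩ = w from hB1, _root_.map_mul, ← Matrix.mulVec_mulVec,
        hjw, Matrix.mulVec_smul, hv z, _root_.map_smul, _root_.map_smul, hew, hev, phi2_cU_jW,
        mulVec_two, smul_two, smul_two, theta_neg_one]
      funext j; fin_cases j <;> simp <;> try ring
  have := LinearMap.congr_fun hL x
  simpa [Matrix.mulVecLin_apply] using this

lemma neg_one_zpow_neg (k : ℤ) : (-1 : ℂ) ^ (-k) = (-1 : ℂ) ^ k := by
  have h : ((-1 : ℂ) ^ k) * ((-1 : ℂ) ^ k) = 1 := by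
    rw [← zpow_add₀ (by norm_num : (-1 : ℂ) ≠ 0), show k + k = 2 * k by ring, _root_.zpow_mul]
    norm_num
  rw [_root_.zpow_neg]
  exact inv_eq_of_mul_eq_one_right h

lemma range_pair {α : Type*} (x y : α) : Set.range ![x, y] = {x, y} := by
  ext a
  constructor
  · rintro ⟨i, rfl⟩
    fin_cases i
    · exact Set.mem_insert _ _
    · exact Set.mem_insert_of_mem _ rfl
  · rintro (rfl | rfl)
    · exact ⟨0, rfl⟩
    · exact ⟨1, rfl⟩

lemma part3_exists (ρ : WeilR →* Matrix (Fin 2) (Fin 2) ℂ)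
    (hcont : Continuous fun w : WeilR => ρ w) (hirr : IsIrreducibleRep ρ) :
    ∃ p : ℤ × ℂ, 1 ≤ p.1 ∧
      ∃ e : (Fin 2 → ℂ) ≃ₗ[ℂ] (Fin 2 → ℂ), ∀ (w : WeilR) (x : Fin 2 → ℂ),
        e ((ρ w) *ᵥ x) = (phi2 p.1 p.2 (w : (ℍ[ℝ])ˣ)) *ᵥ (e x) := by
  obtain ⟨-, hsub⟩ := hirr
  obtain ⟨v, hv, c, hcv⟩ := rep_eigen ρ (by norm_num)
  -- cancellation
  have hcancel : ∀ a b : ℂ, a • v = b • v → a = b := by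
    intro a b hab
    have h0 : (a - b) • v = 0 := by rw [sub_smul, hab, sub_self]
    rcases smul_eq_zero.1 h0 with h | h
    · exact sub_eq_zero.1 h
    · exact absurd h hv
  -- multiplicativity of c
  have hcmul : ∀ z z' : ℂˣ, c (z * z') = c z * c z' := by
    intro z z'
    apply hcancel
    rw [← hcv (z * z'), show cU (z * z') = cU z * cU z' from _root_.map_mul cU z z',
      _root_.map_mul ρ, ← Matrix.mulVec_mulVec, hcv z', Matrix.mulVec_smul,
      hcv z, smul_smul, mul_comm (c z') (c z)]
  have hc1 : c 1 = 1 := by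
    apply hcancel
    rw [← hcv 1, _root_.map_one, _root_.map_one, Matrix.one_mulVec, one_smul]
  have hcne : ∀ z : ℂˣ, c z ≠ 0 := by
    intro z h
    have := hcmul z z⁻¹
    rw [mul_inv_cancel, hc1, h, zero_mul] at this
    exact one_ne_zero this
  -- continuity of c
  obtain ⟨i₀, hvi₀⟩ : ∃ i, v i ≠ 0 := by
    by_contra h
    push_neg at h
    exact hv (funext fun i => h i)
  have hcformula : ∀ z : ℂˣ, c z = ((ρ (cU z)) *ᵥ v) i₀ / v i₀ := by
    intro z
    rw [hcv z]
    field_simp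
    rfl
  have hccont : Continuous c := by
    have h1 : Continuous fun z : ℂˣ => ρ (cU z) := hcont.comp continuous_cU
    have h2 : Continuous fun z : ℂˣ => ((ρ (cU z)) *ᵥ v) i₀ := by
      have : (fun z : ℂˣ => ((ρ (cU z)) *ᵥ v) i₀)
          = fun z : ℂˣ => ∑ j : Fin 2, (ρ (cU z)) i₀ j * v j := by
        funext z
        rfl
      rw [this]
      refine continuous_finset_sum _ fun j _ => ?_
      exact (((continuous_apply j).comp ((continuous_apply i₀).comp h1)).mul continuous_const)
    have : c = fun z : ℂˣ => ((ρ (cU z)) *ᵥ v) i₀ / v i₀ := funext hcformula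
    rw [this]
    exact h2.div_const _
  -- the character
  set χu : ℂˣ →* ℂˣ := MonoidHom.mk' (fun z => Units.mk0 (c z) (hcne z))
    (fun a b => Units.ext (by simp [hcmul])) with hχu
  obtain ⟨k, l, hθ⟩ := char_classify χu (by exact hccont)
  have hct : ∀ z : ℂˣ, c z = theta k l ((z : ℂˣ) : ℂ) := fun z => hθ z
  -- relations
  have R1 : ∀ z : ℂˣ, (ρ (cU z)) *ᵥ v = theta k l (z : ℂ) • v := by
    intro z; rw [hcv z, hct z]
  have R2 : ∀ z : ℂˣ, (ρ (cU z)) *ᵥ ((ρ jW) *ᵥ v)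
      = theta k l (starRingEnd ℂ (z : ℂ)) • ((ρ jW) *ᵥ v) := by
    intro z
    rw [rep_act_jv hcv, hct (star z), Units.coe_star]
    rfl
  have R4 : (ρ jW) *ᵥ ((ρ jW) *ᵥ v) = theta k l (-1) • v := by
    rw [rep_act_jjv hcv, hct (-1)]
    rfl
  -- span is everything
  have hUtop : Submodule.span ℂ {v, (ρ jW) *ᵥ v} = ⊤ := by
    rcases hsub _ (rep_span_invariant hcv) with hbot | htop
    · exfalso
      apply hv
      have : v ∈ Submodule.span ℂ {v, (ρ jW) *ᵥ v} :=
        Submodule.subset_span (Set.mem_insert _ _)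
      rw [hbot] at this
      simpa using this
    · exact htop
  -- k ≠ 0
  have knz : k ≠ 0 := by
    intro hk0
    subst hk0
    have htheta0 : ∀ x : ℂ, theta 0 l (starRingEnd ℂ x) = theta 0 l x := by
      intro x
      unfold theta
      rw [zpow_zero, zpow_zero, Complex.norm_conj]
    have hscal : ∀ z : ℂˣ, ∀ x : Fin 2 → ℂ, (ρ (cU z)) *ᵥ x = c z • x := by
      intro z x
      have hx : x ∈ Submodule.span ℂ {v, (ρ jW) *ᵥ v} := hUtop.symm ▸ Submodule.mem_top
      induction hx using Submodule.span_induction with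
      | mem y hy =>
        rcases hy with rfl | rfl
        · exact hcv z
        · rw [R2 z, htheta0, ← hct z]
      | zero => rw [Matrix.mulVec_zero, smul_zero]
      | add a b _ _ ha hb => rw [Matrix.mulVec_add, ha, hb, smul_add]
      | smul t a _ ha => rw [Matrix.mulVec_smul, ha, smul_comm]
    obtain ⟨μ, hμ⟩ := Module.End.exists_eigenvalue (Matrix.mulVecLin (ρ jW))
    obtain ⟨u, hu⟩ := hμ.exists_hasEigenvector
    have hufix : (ρ jW) *ᵥ u = μ • u := by
      have := hu.apply_eq_smul
      rwa [Matrix.mulVecLin_apply] at this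
    have hune : u ≠ 0 := hu.2
    have hinv : ∀ g : WeilR, ∀ x ∈ Submodule.span ℂ {u}, (ρ g) *ᵥ x ∈ Submodule.span ℂ {u} := by
      intro g x hx
      obtain ⟨a, rfl⟩ := Submodule.mem_span_singleton.1 hx
      rcases weil_cases g with ⟨z, rfl⟩ | ⟨z, rfl⟩
      · rw [hscal z]
        exact Submodule.smul_mem _ _ (Submodule.smul_mem _ _
          (Submodule.mem_span_singleton_self u))
      · rw [_root_.map_mul, ← Matrix.mulVec_mulVec, Matrix.mulVec_smul, hufix, hscal z]
        refine Submodule.smul_mem _ _ (Submodule.smul_mem _ _ (Submodule.smul_mem _ _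
          (Submodule.mem_span_singleton_self u)))
    rcases hsub _ hinv with hbot | htop
    · apply hune
      have := Submodule.mem_span_singleton_self (R := ℂ) u
      rw [hbot] at this
      simpa using this
    · have h1 : Module.finrank ℂ (Submodule.span ℂ {u}) = 1 := finrank_span_singleton hune
      rw [htop, finrank_top] at h1
      rw [Module.finrank_pi ℂ] at h1
      simp at h1
  -- split by sign of k
  rcases knz.lt_or_gt with hkneg | hkpos
  · -- swap case
    have hθm1 : theta k l (-1) = (-1 : ℂ) ^ k := theta_neg_one k l
    have hθm1' : theta k l (-1) ≠ 0 := by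
      rw [hθm1]
      exact zpow_ne_zero _ (by norm_num)
    have hv1 : ∀ z : ℂˣ, (ρ (cU z)) *ᵥ ((ρ jW) *ᵥ v) = theta (-k) l (z : ℂ) • ((ρ jW) *ᵥ v) := by
      intro z
      rw [R2 z, theta_conj z.ne_zero]
    have hw1 : ∀ z : ℂˣ, (ρ (cU z)) *ᵥ (theta k l (-1) • v)
        = theta (-k) l (starRingEnd ℂ (z : ℂ)) • (theta k l (-1) • v) := by
      intro z
      rw [Matrix.mulVec_smul, R1 z, show theta (-k) l (starRingEnd ℂ (z : ℂ)) = theta k l (z : ℂ) by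
        rw [theta_conj z.ne_zero, neg_neg], smul_comm]
    have hjv1 : (ρ jW) *ᵥ ((ρ jW) *ᵥ v) = theta k l (-1) • v := R4
    have hjw1 : (ρ jW) *ᵥ (theta k l (-1) • v) = theta (-k) l (-1) • ((ρ jW) *ᵥ v) := by
      rw [Matrix.mulVec_smul, theta_neg_one, theta_neg_one, neg_one_zpow_neg]
    have hspan1 : ⊤ ≤ Submodule.span ℂ (Set.range ![(ρ jW) *ᵥ v, theta k l (-1) • v]) := by
      rw [range_pair, ← hUtop]
      apply Submodule.span_le.2
      have hvmem : v ∈ Submodule.span ℂ {(ρ jW) *ᵥ v, theta k l (-1) • v} := by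
        have hmem : theta k l (-1) • v ∈
            Submodule.span ℂ {(ρ jW) *ᵥ v, theta k l (-1) • v} :=
          Submodule.subset_span (Set.mem_insert_of_mem _ rfl)
        have h2 := Submodule.smul_mem _ (theta k l (-1))⁻¹ hmem
        rwa [smul_smul, inv_mul_cancel₀ hθm1', one_smul] at h2
      have hjvmem : (ρ jW) *ᵥ v ∈ Submodule.span ℂ {(ρ jW) *ᵥ v, theta k l (-1) • v} :=
        Submodule.subset_span (Set.mem_insert _ _)
      intro x hx
      rcases hx with h | h
      · rw [h]; exact hvmem
      · rw [h]; exact hjvmem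
    obtain ⟨e, he⟩ := build_equiv hv1 hw1 hjv1 hjw1 hspan1
    exact ⟨(-k, l), by omega, e, he⟩
  · -- k ≥ 1
    have hspan0 : ⊤ ≤ Submodule.span ℂ (Set.range ![v, (ρ jW) *ᵥ v]) := by
      rw [range_pair, hUtop]
    obtain ⟨e, he⟩ := build_equiv R1 R2 rfl R4 hspan0
    exact ⟨(k, l), by omega, e, he⟩

/-! ### Uniqueness for part 3 -/

lemma trace_conj {ρ : WeilR →* Matrix (Fin 2) (Fin 2) ℂ} {k : ℤ} {l : ℂ}
    (e : (Fin 2 → ℂ) ≃ₗ[ℂ] (Fin 2 → ℂ))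
    (he : ∀ (g : WeilR) (x : Fin 2 → ℂ),
      e ((ρ g) *ᵥ x) = (phi2 k l (g : (ℍ[ℝ])ˣ)) *ᵥ (e x)) :
    ∀ g : WeilR, Matrix.trace (phi2 k l (g : (ℍ[ℝ])ˣ)) = Matrix.trace (ρ g) := by
  set M := LinearMap.toMatrix' (e.toLinearMap) with hMdef
  set N := LinearMap.toMatrix' (e.symm.toLinearMap) with hNdef
  have hMN : M * N = 1 := by
    rw [hMdef, hNdef, ← LinearMap.toMatrix'_comp, ← LinearMap.toMatrix'_id (R := ℂ) (n := Fin 2)]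
    congr 1
    apply LinearMap.ext
    intro x
    simp
  have hNM : N * M = 1 := by
    rw [hMdef, hNdef, ← LinearMap.toMatrix'_comp, ← LinearMap.toMatrix'_id (R := ℂ) (n := Fin 2)]
    congr 1
    apply LinearMap.ext
    intro x
    simp
  have hM : ∀ y : Fin 2 → ℂ, M *ᵥ y = e y := by
    intro y
    rw [← Matrix.toLin'_apply, hMdef, Matrix.toLin'_toMatrix']
    rfl
  intro g
  have key : M * (ρ g) = phi2 k l (g : (ℍ[ℝ])ˣ) * M := by
    have h1 : ∀ x : Fin 2 → ℂ, Matrix.toLin' (M * ρ g) x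
        = Matrix.toLin' (phi2 k l (g : (ℍ[ℝ])ˣ) * M) x := by
      intro x
      rw [Matrix.toLin'_apply, Matrix.toLin'_apply, ← Matrix.mulVec_mulVec,
        ← Matrix.mulVec_mulVec, hM, hM, he]
    exact Matrix.toLin'.injective (LinearMap.ext h1)
  have h2 : phi2 k l (g : (ℍ[ℝ])ˣ) = M * (ρ g * N) := by
    calc phi2 k l (g : (ℍ[ℝ])ˣ) = phi2 k l (g : (ℍ[ℝ])ˣ) * (M * N) := by rw [hMN, mul_one]
      _ = (phi2 k l (g : (ℍ[ℝ])ˣ) * M) * N := by rw [mul_assoc]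
      _ = (M * ρ g) * N := by rw [key]
      _ = M * (ρ g * N) := by rw [mul_assoc]
  rw [h2, Matrix.trace_mul_comm, mul_assoc, hNM, mul_one]

lemma part3_unique_traces {k k' : ℤ} {l l' : ℂ} (hk : 1 ≤ k) (hk' : 1 ≤ k')
    (htr : ∀ z : ℂˣ, theta k l (z : ℂ) + theta k l (starRingEnd ℂ (z : ℂ))
      = theta k' l' (z : ℂ) + theta k' l' (starRingEnd ℂ (z : ℂ))) :
    k = k' ∧ l = l' := by
  -- l = l'
  have hl : l = l' := by
    have key : ∀ s : ℝ, Complex.exp ((2 * l) * (s : ℂ)) = Complex.exp ((2 * l') * (s : ℂ)) := by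
      intro s
      have h := htr (E ((s : ℝ) : ℂ))
      rw [show ((E ((s : ℝ) : ℂ) : ℂˣ) : ℂ) = ((Real.exp s : ℝ) : ℂ) by
        rw [E_val, Complex.ofReal_exp]] at h
      rw [Complex.conj_ofReal, theta_exp_real, theta_exp_real] at h
      have h2 : (2 : ℂ) * Complex.exp ((2 * l) * (s : ℂ))
          = 2 * Complex.exp ((2 * l') * (s : ℂ)) := by linear_combination h
      exact mul_left_cancel₀ (two_ne_zero) h2
    have h3 := exp_param_inj key
    exact mul_left_cancel₀ (two_ne_zero) h3
  refine ⟨?_, hl⟩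
  -- k = k'
  have hcirc : ∀ s : ℝ, Complex.exp ((k : ℂ) * ((s : ℂ) * Complex.I))
      + (Complex.exp ((k : ℂ) * ((s : ℂ) * Complex.I)))⁻¹
      = Complex.exp ((k' : ℂ) * ((s : ℂ) * Complex.I))
      + (Complex.exp ((k' : ℂ) * ((s : ℂ) * Complex.I)))⁻¹ := by
    intro s
    have h := htr (E ((s : ℂ) * Complex.I))
    rw [show ((E ((s : ℂ) * Complex.I) : ℂˣ) : ℂ) = Complex.exp ((s : ℂ) * Complex.I) from rfl] at h
    rw [show starRingEnd ℂ (Complex.exp ((s : ℂ) * Complex.I))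
        = Complex.exp (((-s : ℝ) : ℂ) * Complex.I) by
      rw [← Complex.exp_conj]; congr 1; simp] at h
    rw [theta_circle, theta_circle, theta_circle, theta_circle] at h
    rw [show ((-s : ℝ) : ℂ) * Complex.I = -((s : ℂ) * Complex.I) by push_cast; ring] at h
    rw [mul_neg, Complex.exp_neg, mul_neg, Complex.exp_neg] at h
    exact h
  set s₀ : ℝ := Real.pi / ((k : ℝ) + (k' : ℝ)) with hs₀
  have hkk'pos : (0 : ℝ) < (k : ℝ) + (k' : ℝ) := by
    have : (2 : ℝ) ≤ (k : ℝ) + (k' : ℝ) := by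
      push_cast
      exact_mod_cast add_le_add hk hk'
    linarith
  set A : ℂ := Complex.exp ((k : ℂ) * ((s₀ : ℂ) * Complex.I)) with hA
  set B : ℂ := Complex.exp ((k' : ℂ) * ((s₀ : ℂ) * Complex.I)) with hB
  have hABval : A * B = -1 := by
    rw [hA, hB, ← Complex.exp_add]
    rw [show (k : ℂ) * ((s₀ : ℂ) * Complex.I) + (k' : ℂ) * ((s₀ : ℂ) * Complex.I)
        = ((((k : ℝ) + (k' : ℝ)) * s₀ : ℝ) : ℂ) * Complex.I by push_cast; ring]
    rw [show ((k : ℝ) + (k' : ℝ)) * s₀ = Real.pi by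
      rw [hs₀]; field_simp]
    exact Complex.exp_pi_mul_I
  have hfac : (A - B) * (A * B - 1) = 0 := by
    have hAne : A ≠ 0 := Complex.exp_ne_zero _
    have hBne : B ≠ 0 := Complex.exp_ne_zero _
    have h1 : (A - B) * (A * B - 1) = ((A + A⁻¹) - (B + B⁻¹)) * (A * B) := by
      field_simp
      ring
    rw [h1, hcirc s₀, sub_self, zero_mul]
  have hABne : A * B - 1 ≠ 0 := by
    rw [hABval]
    norm_num
  have hAeqB : A = B := by
    rcases mul_eq_zero.1 hfac with h | h
    · exact sub_eq_zero.1 h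
    · exact absurd h hABne
  -- deduce k = k'
  have hexp1 : Complex.exp (((k - k' : ℤ) : ℂ) * ((s₀ : ℂ) * Complex.I)) = 1 := by
    rw [show ((k - k' : ℤ) : ℂ) * ((s₀ : ℂ) * Complex.I)
        = (k : ℂ) * ((s₀ : ℂ) * Complex.I) - (k' : ℂ) * ((s₀ : ℂ) * Complex.I) by
      push_cast; ring]
    rw [Complex.exp_sub, ← hA, ← hB, hAeqB, div_self (Complex.exp_ne_zero _)]
  obtain ⟨n, hn⟩ := Complex.exp_eq_one_iff.1 hexp1
  have hreal : ((k : ℝ) - (k' : ℝ)) * s₀ = (n : ℝ) * (2 * Real.pi) := by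
    have h1 : (((k - k' : ℤ) : ℂ)) * (s₀ : ℂ) * Complex.I
        = ((n : ℂ) * (2 * (Real.pi : ℂ))) * Complex.I := by
      rw [mul_assoc, hn]; ring
    have h2 := mul_right_cancel₀ Complex.I_ne_zero h1
    have h3 : ((((k : ℝ) - (k' : ℝ)) * s₀ : ℝ) : ℂ) = (((n : ℝ) * (2 * Real.pi) : ℝ) : ℂ) := by
      push_cast at h2 ⊢
      linear_combination h2
    exact_mod_cast h3
  -- integer equation
  have hint : (k : ℝ) - (k' : ℝ) = 2 * (n : ℝ) * ((k : ℝ) + (k' : ℝ)) := by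
    rw [hs₀] at hreal
    field_simp at hreal
    nlinarith [Real.pi_pos, hreal]
  have hintZ : k - k' = 2 * n * (k + k') := by
    exact_mod_cast hint
  have hn0 : n = 0 := by
    rcases lt_trichotomy n 0 with h | h | h
    · nlinarith [hintZ, hk, hk']
    · exact h
    · nlinarith [hintZ, hk, hk']
  rw [hn0] at hintZ
  omega

lemma trace_phi2_cU (k : ℤ) (l : ℂ) (z : ℂˣ) :
    Matrix.trace (phi2 k l ((cU z : WeilR) : (ℍ[ℝ])ˣ))
      = theta k l (z : ℂ) + theta k l (starRingEnd ℂ (z : ℂ)) := by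
  rw [phi2_cU, Matrix.trace_fin_two]
  simp
/-- Every irreducible continuous finite-dimensional complex representation of `W_ℝ` has
dimension `1` or `2`; every continuous character `W_ℝ → ℂˣ` equals `φ^{(1)}_{k,λ}` for a unique
pair `(k,λ) ∈ {0,1} × ℂ`; and every `2`-dimensional irreducible continuous representation of
`W_ℝ` is isomorphic to `φ^{(2)}_{k,λ}` for a unique pair `(k,λ) ∈ ℤ_{≥1} × ℂ`. -/
theorem weilR_irreducible_classification :
    (∀ (n : ℕ) (ρ : WeilR →* Matrix (Fin n) (Fin n) ℂ),
        Continuous (fun w : WeilR => ρ w) → IsIrreducibleRep ρ → n = 1 ∨ n = 2) ∧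
    (∀ ρ : WeilR →* ℂˣ, Continuous (fun w : WeilR => (ρ w : ℂ)) →
        ∃! p : ℤ × ℂ, (p.1 = 0 ∨ p.1 = 1) ∧
          ∀ w : WeilR, (ρ w : ℂ) = phi1 p.1 p.2 (w : (ℍ[ℝ])ˣ)) ∧
    (∀ ρ : WeilR →* Matrix (Fin 2) (Fin 2) ℂ,
        Continuous (fun w : WeilR => ρ w) → IsIrreducibleRep ρ →
        ∃! p : ℤ × ℂ, 1 ≤ p.1 ∧
          ∃ e : (Fin 2 → ℂ) ≃ₗ[ℂ] (Fin 2 → ℂ), ∀ (w : WeilR) (v : Fin 2 → ℂ),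
            e ((ρ w).mulVec v) = (phi2 p.1 p.2 (w : (ℍ[ℝ])ˣ)).mulVec (e v)) := by
  refine ⟨?_, ?_, ?_⟩
  · intro n ρ hcont hirr
    exact part1 ρ hcont hirr
  · intro ρ hcont
    exact part2 ρ hcont
  · intro ρ hcont hirr
    obtain ⟨p, hp1, e, he⟩ := part3_exists ρ hcont hirr
    obtain ⟨k, l⟩ := p
    replace hp1 : 1 ≤ k := hp1
    replace he : ∀ (w : WeilR) (x : Fin 2 → ℂ),
        e ((ρ w) *ᵥ x) = (phi2 k l (w : (ℍ[ℝ])ˣ)) *ᵥ (e x) := he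
    refine ⟨(k, l), ⟨hp1, e, he⟩, ?_⟩
    rintro ⟨k', l'⟩ ⟨hk', e', he'⟩
    replace hk' : 1 ≤ k' := hk'
    replace he' : ∀ (w : WeilR) (x : Fin 2 → ℂ),
        e' ((ρ w) *ᵥ x) = (phi2 k' l' (w : (ℍ[ℝ])ˣ)) *ᵥ (e' x) := he'
    have htr1 := trace_conj e he
    have htr2 := trace_conj e' he'
    have htr : ∀ z : ℂˣ, theta k' l' (z : ℂ) + theta k' l' (starRingEnd ℂ (z : ℂ))
        = theta k l (z : ℂ) + theta k l (starRingEnd ℂ (z : ℂ)) := by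
      intro z
      have h := (htr2 (cU z)).trans (htr1 (cU z)).symm
      rwa [trace_phi2_cU, trace_phi2_cU] at h
    obtain ⟨hkk, hll⟩ := part3_unique_traces hk' hp1 htr
    rw [hkk, hll]

end PTB
end
end

section
/- Let V be a finite-dimensional real inner product space, G a finite group of orthogonal linear automorphisms of V, and Ξ a nonempty finite subset of V that is stable under G and contained in an open half-space (i.e., there exists u ∈ V with ⟨α, u⟩ > 0 for every α ∈ Ξ). Then there exists X ∈ V of the form X = Σ_{α ∈ Ξ} c_α·α with all coefficients c_α > 0, such that τ(X) = X for every τ ∈ G and ⟨α, X⟩ > 0 for every α ∈ Ξ. -/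
open scoped RealInnerProductSpace

/-- Let `V` be a finite-dimensional real inner product space, `G` a finite group of orthogonal
linear automorphisms of `V`, and `Ξ` a nonempty finite subset of `V` stable under `G` and
contained in an open half-space.  Then there is an `X = ∑_{α ∈ Ξ} c_α • α` with all `c_α > 0`
which is fixed by every `τ ∈ G` and satisfies `⟪α, X⟫ > 0` for every `α ∈ Ξ`. -/
theorem exists_positive_combination_fixed {V : Type*} [NormedAddCommGroup V]
    [InnerProductSpace ℝ V] [FiniteDimensional ℝ V]
    (G : Subgroup (V ≃ₗᵢ[ℝ] V)) [Finite G]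
    (Ξ : Finset V) (hne : Ξ.Nonempty)
    (hstab : ∀ τ ∈ G, ∀ α ∈ Ξ, τ α ∈ Ξ)
    (hhalf : ∃ u : V, ∀ α ∈ Ξ, 0 < ⟪α, u⟫) :
    ∃ c : V → ℝ, (∀ α ∈ Ξ, 0 < c α) ∧
      (∀ τ ∈ G, τ (∑ α ∈ Ξ, c α • α) = ∑ α ∈ Ξ, c α • α) ∧
      (∀ α ∈ Ξ, 0 < ⟪α, ∑ β ∈ Ξ, c β • β⟫) := by
  classical
  haveI : Fintype G := Fintype.ofFinite G
  obtain ⟨u, hu⟩ := hhalf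
  set K : Set V := convexHull ℝ (Ξ : Set V) with hK
  have hKconv : Convex ℝ K := convex_convexHull ℝ _
  have hKne : K.Nonempty := ⟨hne.choose, subset_convexHull ℝ _ hne.choose_spec⟩
  have hKcomp : IsCompact K := Ξ.finite_toSet.isCompact_convexHull ℝ
  obtain ⟨v, hvK, hvmin⟩ :=
    exists_norm_eq_iInf_of_complete_convex hKne hKcomp.isComplete hKconv 0
  have hproj : ∀ w ∈ K, ⟪(0:V) - v, w - v⟫ ≤ 0 :=
    (norm_eq_iInf_iff_real_inner_le_zero hKconv hvK).mp hvmin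
  have hαv : ∀ α ∈ Ξ, ‖v‖ ^ 2 ≤ ⟪α, v⟫ := by
    intro α hα
    have h := hproj α (subset_convexHull ℝ _ hα)
    rw [zero_sub, inner_sub_right, inner_neg_left, inner_neg_left] at h
    have hvv : ⟪v, v⟫ = ‖v‖ ^ 2 := real_inner_self_eq_norm_sq v
    have hcomm : ⟪v, α⟫ = ⟪α, v⟫ := real_inner_comm α v
    linarith
  obtain ⟨w, hw0, hw1, hwc⟩ : ∃ w : V → ℝ, (∀ y ∈ Ξ, 0 ≤ w y) ∧ ∑ y ∈ Ξ, w y = 1 ∧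
      Ξ.centerMass w id = v := by
    have h' := hvK
    rw [hK, Finset.convexHull_eq] at h'
    exact h'
  have hv_repr : v = ∑ α ∈ Ξ, w α • α := by
    rw [← hwc, Finset.centerMass_eq_of_sum_1 _ _ hw1]; rfl
  have hvne : v ≠ 0 := by
    intro h0
    obtain ⟨α, hα, hwα⟩ : ∃ α ∈ Ξ, 0 < w α := by
      by_contra hc
      push_neg at hc
      have : ∑ y ∈ Ξ, w y ≤ 0 := Finset.sum_nonpos hc
      linarith
    have hpos : 0 < ⟪v, u⟫ := by
      rw [hv_repr, sum_inner]
      refine Finset.sum_pos' (fun β hβ => ?_) ⟨α, hα, ?_⟩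
      · rw [real_inner_smul_left]
        exact mul_nonneg (hw0 β hβ) (le_of_lt (hu β hβ))
      · rw [real_inner_smul_left]
        exact mul_pos hwα (hu α hα)
    rw [h0, inner_zero_left] at hpos
    exact lt_irrefl 0 hpos
  have hv2 : 0 < ‖v‖ ^ 2 := by
    have : 0 < ‖v‖ := norm_pos_iff.mpr hvne
    positivity
  set S : V := ∑ α ∈ Ξ, α with hS
  set B : ℝ := Ξ.sup' hne fun α => |⟪α, S⟫| with hB
  have hB0 : 0 ≤ B := le_trans (abs_nonneg _) (Finset.le_sup' (fun α => |⟪α, S⟫|) hne.choose_spec)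
  set ε : ℝ := ‖v‖ ^ 2 / (2 * (B + 1)) with hε
  have hεpos : 0 < ε := by positivity
  set c₀ : V → ℝ := fun α => w α + ε with hc₀
  have hc₀pos : ∀ α ∈ Ξ, 0 < c₀ α := fun α hα => add_pos_of_nonneg_of_pos (hw0 α hα) hεpos
  set X₁ : V := ∑ α ∈ Ξ, c₀ α • α with hX₁def
  have hX₁ : X₁ = v + ε • S := by
    rw [hX₁def, hv_repr, hS, Finset.smul_sum, ← Finset.sum_add_distrib]
    exact Finset.sum_congr rfl fun α _ => by rw [hc₀, add_smul]
  have hinner₁ : ∀ α ∈ Ξ, 0 < ⟪α, X₁⟫ := by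
    intro α hα
    rw [hX₁, inner_add_right, real_inner_smul_right]
    have h1 : ‖v‖ ^ 2 ≤ ⟪α, v⟫ := hαv α hα
    have h2 : |⟪α, S⟫| ≤ B := Finset.le_sup' (fun β => |⟪β, S⟫|) hα
    have h3 := abs_le.mp h2
    have hεB : ε * (B + 1) = ‖v‖ ^ 2 / 2 := by
      rw [hε]; field_simp
    nlinarith [mul_le_mul_of_nonneg_left h3.1 hεpos.le]
  -- symmetrization
  set c : V → ℝ := fun α => ∑ τ : G, c₀ ((τ : V ≃ₗᵢ[ℝ] V)⁻¹ α) with hc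
  have hinv_mem : ∀ (τ : G), ∀ α ∈ Ξ, (τ : V ≃ₗᵢ[ℝ] V)⁻¹ α ∈ Ξ := by
    intro τ α hα
    exact hstab _ (inv_mem τ.2) α hα
  have hmem : ∀ (τ : G), ∀ α ∈ Ξ, (τ : V ≃ₗᵢ[ℝ] V) α ∈ Ξ := by
    intro τ α hα
    exact hstab _ τ.2 α hα
  have hterm : ∀ τ : G, ∑ α ∈ Ξ, c₀ ((τ : V ≃ₗᵢ[ℝ] V)⁻¹ α) • α
      = (τ : V ≃ₗᵢ[ℝ] V) X₁ := by
    intro τ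
    rw [hX₁def, map_sum]
    simp only [LinearIsometryEquiv.map_smul]
    refine Finset.sum_nbij' (fun α => (τ : V ≃ₗᵢ[ℝ] V)⁻¹ α)
      (fun β => (τ : V ≃ₗᵢ[ℝ] V) β) (fun α hα => hinv_mem τ α hα)
      (fun β hβ => hmem τ β hβ) (fun α _ => by simp) (fun β _ => by simp)
      (fun α hα => by simp)
  have hsum : ∑ α ∈ Ξ, c α • α = ∑ τ : G, (τ : V ≃ₗᵢ[ℝ] V) X₁ := by
    rw [← Finset.sum_congr rfl fun τ _ => hterm τ, Finset.sum_comm]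
    exact Finset.sum_congr rfl fun α _ => by rw [hc, Finset.sum_smul]
  refine ⟨c, ?_, ?_, ?_⟩
  · intro α hα
    rw [hc]
    exact Finset.sum_pos (fun τ _ => hc₀pos _ (hinv_mem τ α hα)) ⟨1, Finset.mem_univ 1⟩
  · intro τ hτ
    rw [hsum, map_sum]
    refine Fintype.sum_equiv (Equiv.mulLeft (⟨τ, hτ⟩ : G)) _ _ fun σ => ?_
    simp only [Equiv.coe_mulLeft]
    rfl
  · intro α hα
    rw [hsum, inner_sum]
    refine Finset.sum_pos (fun τ _ => ?_) ⟨1, Finset.mem_univ 1⟩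
    have : ⟪α, (τ : V ≃ₗᵢ[ℝ] V) X₁⟫ = ⟪(τ : V ≃ₗᵢ[ℝ] V)⁻¹ α, X₁⟫ := by
      conv_lhs => rw [show α = (τ : V ≃ₗᵢ[ℝ] V) ((τ : V ≃ₗᵢ[ℝ] V)⁻¹ α) by simp]
      exact LinearIsometryEquiv.inner_map_map _ _ _
    rw [this]
    exact hinner₁ _ (hinv_mem τ α hα)
end
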